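/- arXiv:2502.02530 — 6 statements merged into one kernel-verified Lean document; each statement's English description precedes it below -/
import Mathlib

section
/- The greedy algorithm that starts from an arbitrary point and repeatedly adds the point maximizing the d_min distance to the current set yields a set S of k points with div(S) ≥ R*/(2+ε), where R* is the maximum over all k-subsets O of min_{u≠v ∈ O} d(u,v); i.e., it is a 1/(2+ε)-approximation on ε-symmetric instances. -/
/-- Greedy (Algorithm 1 with d_min distances) is a 1/(2+ε)-approximation on
ε-symmetric instances: the greedily chosen points `v 0, …, v (k-1)` have
pairwise distances at least `R/(2+ε)` for any value `R` achieved by some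
`k`-subset `O` (in particular for the optimum `R*`). -/
theorem greedy_dmin_approx (U : Type*) [Fintype U] [DecidableEq U]
    (d : U → U → ℝ) (ε : ℝ) (k : ℕ)
    (hnn : ∀ u v, 0 ≤ d u v) (hzero : ∀ u, d u u = 0)
    (htri : ∀ u v w, d u v ≤ d u w + d w v)
    (hε : 0 ≤ ε)
    (hsym : ∀ u v, max (d u v) (d v u) ≤ (1 + ε) * min (d u v) (d v u))
    (hk : 2 ≤ k) (hcard : k ≤ Fintype.card U)
    (v : Fin k → U) (hinj : Function.Injective v)
    -- greedy property: each `v i` maximizes the `d_min` distance to the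
    -- previously chosen points `{v j : j < i}`
    (hgreedy : ∀ i : Fin k, ∀ u : U, ∀ x : ℝ,
      (∀ j : Fin k, j < i → x ≤ min (d u (v j)) (d (v j) u)) →
      (∀ j : Fin k, j < i → x ≤ min (d (v i) (v j)) (d (v j) (v i)))) :
    ∀ O : Finset U, O.card = k → ∀ R : ℝ,
      (∀ x ∈ O, ∀ y ∈ O, x ≠ y → R ≤ d x y) →
      ∀ i j : Fin k, i ≠ j → R / (2 + ε) ≤ d (v i) (v j) := by
  intro O hO R hR i j hij
  have h2ε : (0:ℝ) < 2 + ε := by linarith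
  set x := R / (2 + ε) with hx
  have hxR : (2 + ε) * x = R := by
    rw [hx, mul_div_cancel₀ _ (ne_of_gt h2ε)]
  have key : ∀ p q : Fin k, q < p → x ≤ min (d (v p) (v q)) (d (v q) (v p)) := by
    intro p q hqp
    by_cases hA : ∃ o : U, ∀ j : Fin k, j < p → x ≤ min (d o (v j)) (d (v j) o)
    · obtain ⟨o, ho⟩ := hA
      exact hgreedy p o x ho q hqp
    · exfalso
      push_neg at hA
      have hchoice : ∀ o : U, ∃ jp : Fin k, jp < p ∧ min (d o (v jp)) (d (v jp) o) < x := by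
        intro o
        obtain ⟨jp, hjp, hlt⟩ := hA o
        exact ⟨jp, hjp, hlt⟩
      classical
      let g : U → Fin k := fun o => (hchoice o).choose
      have hg : ∀ o : U, g o < p ∧ min (d o (v (g o))) (d (v (g o)) o) < x := fun o =>
        (hchoice o).choose_spec
      have hcardlt : (Finset.Iio p).card < O.card := by
        rw [hO, Fin.card_Iio]
        exact p.isLt
      have hmaps : ∀ o ∈ O, g o ∈ Finset.Iio p := fun o _ =>
        Finset.mem_Iio.mpr (hg o).1
      obtain ⟨o1, ho1, o2, ho2, hne, heq⟩ :=
        Finset.exists_ne_map_eq_of_card_lt_of_maps_to hcardlt hmaps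
      set s := v (g o1) with hs
      have hs2 : v (g o2) = s := by rw [hs, heq]
      have hm1 : min (d o1 s) (d s o1) < x := (hg o1).2
      have hm2 : min (d o2 s) (d s o2) < x := by
        have := (hg o2).2
        rwa [hs2] at this
      have hR1 : R ≤ d o1 o2 := hR o1 ho1 o2 ho2 hne
      have hR2 : R ≤ d o2 o1 := hR o2 ho2 o1 ho1 hne.symm
      have ht1 : d o1 o2 ≤ d o1 s + d s o2 := htri o1 o2 s
      have ht2 : d o2 o1 ≤ d o2 s + d s o1 := htri o2 o1 s
      have hsum1 : min (d o1 s) (d s o1) + max (d o1 s) (d s o1) = d o1 s + d s o1 :=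
        min_add_max _ _
      have hsum2 : min (d o2 s) (d s o2) + max (d o2 s) (d s o2) = d o2 s + d s o2 :=
        min_add_max _ _
      have hM1 : max (d o1 s) (d s o1) ≤ (1 + ε) * min (d o1 s) (d s o1) := hsym o1 s
      have hM2 : max (d o2 s) (d s o2) ≤ (1 + ε) * min (d o2 s) (d s o2) := hsym o2 s
      have he1 : ε * min (d o1 s) (d s o1) ≤ ε * x :=
        mul_le_mul_of_nonneg_left hm1.le hε
      have he2 : ε * min (d o2 s) (d s o2) ≤ ε * x :=
        mul_le_mul_of_nonneg_left hm2.le hε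
      nlinarith [hm1, hm2, hR1, hR2, ht1, ht2, hsum1, hsum2, hM1, hM2, he1, he2, hxR]
  rcases hij.lt_or_gt with h | h
  · exact le_trans (key j i h) (min_le_right _ _)
  · exact le_trans (key i j h) (min_le_left _ _)
end

section
/- For every ε ≥ 0 there exists an ε-symmetric asymmetric pseudometric instance on three points and k = 2 such that the greedy d_min algorithm, with an adversarial choice of the starting point, returns a set whose diversity score is exactly R*/(2+ε) where R* is the optimal value; hence the ratio 1/(2+ε) is tight. -/
set_option maxHeartbeats 2000000


/-- Tightness of the ratio 1/(2+ε): for every ε ≥ 0 there is an ε-symmetric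
asymmetric pseudometric on three points `x, y, z` for which, with `k = 2`, the
optimum is `1` (attained by `{x, y}`), yet any 2-set containing the possible
greedy starting point `z` has diversity score exactly `1/(2+ε)`. -/
theorem greedy_dmin_tight :
    ∀ ε : ℝ, 0 ≤ ε →
      ∃ (U : Type) (_ : Fintype U) (d : U → U → ℝ) (x y z : U),
        x ≠ y ∧ x ≠ z ∧ y ≠ z ∧
        (∀ u : U, u = x ∨ u = y ∨ u = z) ∧
        (∀ u v, 0 ≤ d u v) ∧ (∀ u, d u u = 0) ∧
        (∀ u v w, d u v ≤ d u w + d w v) ∧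
        (∀ u v, max (d u v) (d v u) ≤ (1 + ε) * min (d u v) (d v u)) ∧
        -- the optimum for k = 2 is 1, attained by {x, y}
        d x y = 1 ∧ d y x = 1 ∧
        (∀ u v : U, u ≠ v → min (d u v) (d v u) ≤ 1) ∧
        -- any 2-set containing z has diversity score exactly 1/(2+ε),
        -- so greedy starting from z returns a set of value R*/(2+ε)
        (∀ u : U, u ≠ z → min (d u z) (d z u) = 1 / (2 + ε)) := by
  intro ε hε
  have h2 : (0:ℝ) < 2 + ε := by linarith
  have hinv : (2 + ε) * (2 + ε)⁻¹ = 1 := mul_inv_cancel₀ h2.ne'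
  have hinvpos : (0:ℝ) < (2 + ε)⁻¹ := inv_pos.mpr h2
  have hεinv : 0 ≤ ε * (2 + ε)⁻¹ := mul_nonneg hε hinvpos.le
  have hε2inv : 0 ≤ ε * ε * (2 + ε)⁻¹ := mul_nonneg (mul_nonneg hε hε) hinvpos.le
  refine ⟨Fin 3, inferInstance,
    fun i j => ![![0, 1, 1/(2+ε)], ![1, 0, 1/(2+ε)],
      ![(1+ε)/(2+ε), (1+ε)/(2+ε), 0]] i j, 0, 1, 2,
    by decide, by decide, by decide, by decide, ?_, ?_, ?_, ?_, ?_, ?_, ?_, ?_⟩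
  · intro u v; fin_cases u <;> fin_cases v <;>
      simp [div_eq_mul_inv] <;> nlinarith [hinv, hinvpos, hεinv, hε2inv]
  · intro u; fin_cases u <;> simp
  · intro u v w; fin_cases u <;> fin_cases v <;> fin_cases w <;>
      simp [div_eq_mul_inv] <;> nlinarith [hinv, hinvpos, hεinv, hε2inv]
  · intro u v; fin_cases u <;> fin_cases v <;>
      simp [div_eq_mul_inv, max_def, min_def] <;>
      (try split_ifs) <;> nlinarith [hinv, hinvpos, hεinv, hε2inv]
  · simp
  · simp
  · intro u v huv; fin_cases u <;> fin_cases v <;>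
      first
        | exact absurd rfl huv
        | (simp [div_eq_mul_inv, min_def] <;>
           (try split_ifs) <;> nlinarith [hinv, hinvpos, hεinv, hε2inv])
  · intro u hu; fin_cases u <;>
      first
        | exact absurd rfl hu
        | (simp [div_eq_mul_inv, min_def] <;>
           (try split_ifs) <;>
             first
               | rfl
               | (exfalso; nlinarith [hinv, hinvpos, hεinv, hε2inv])
               | (intro h; exfalso; nlinarith [hinv, hinvpos, hεinv, hε2inv])
               | nlinarith [hinv, hinvpos, hεinv, hε2inv])
end

section
/- Let (U,d) be an asymmetric pseudometric with |U| = n, let O ⊆ U with |O| = k satisfy d(x,y) ≥ R for all distinct x,y ∈ O, and let G_R be the digraph on U with an edge (i,j) whenever d(i,j) < R/(n−k+1). Then no point of O is reachable in G_R from any other distinct point of O; in particular O is an antichain of G_R of size k. -/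
/-- In the graph `G_R` with an edge `(i,j)` whenever `d i j < R/(n-k+1)`,
the points of an optimal set `O` (pairwise distances ≥ R) are pairwise
mutually unreachable; in particular `O` is an antichain of size `k`. -/
theorem optimal_set_is_antichain (U : Type*) [Fintype U]
    (d : U → U → ℝ) (R : ℝ) (k : ℕ)
    (hnn : ∀ u v, 0 ≤ d u v) (hzero : ∀ u, d u u = 0)
    (htri : ∀ u v w, d u v ≤ d u w + d w v)
    (hk : k ≤ Fintype.card U)
    (O : Finset U) (hcard : O.card = k)
    (hO : ∀ x ∈ O, ∀ y ∈ O, x ≠ y → R ≤ d x y) :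
    ∀ x ∈ O, ∀ y ∈ O, x ≠ y →
      ¬ Relation.ReflTransGen
          (fun i j => d i j < R / ((Fintype.card U : ℝ) - k + 1)) x y := by
  classical
  intro x hx y hy hxy hreach
  set n := Fintype.card U with hn
  set ε := R / ((n : ℝ) - k + 1) with hεdef
  have hnk : (0:ℝ) < (n:ℝ) - k + 1 := by
    have : (k:ℝ) ≤ (n:ℝ) := by exact_mod_cast hk
    linarith
  rcases le_or_gt ε 0 with hε0 | hε0
  · rcases hreach.cases_head with rfl | ⟨c, hc, -⟩
    · exact hxy rfl
    · exact absurd hc (not_lt.2 (le_trans hε0 (hnn _ _)))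
  · -- ε > 0 case
    have hεR : ((n:ℝ) - k + 1) * ε = R := by
      rw [hεdef, mul_div_cancel₀ _ (ne_of_gt hnk)]
    have hcardT : ∀ T : Finset U, x ∈ T → (∀ v ∈ T, v ∈ O → v = x) →
        (T.card : ℝ) ≤ (n:ℝ) - k + 1 := by
      intro T hxT hinv
      have hsub : T ⊆ insert x Oᶜ := by
        intro v hv
        by_cases hvO : v ∈ O
        · simp [hinv v hv hvO]
        · exact Finset.mem_insert_of_mem (Finset.mem_compl.2 hvO)
      have h1 : T.card ≤ (insert x Oᶜ).card := Finset.card_le_card hsub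
      have h2 : (insert x Oᶜ).card ≤ Oᶜ.card + 1 := Finset.card_insert_le _ _
      have h3 : Oᶜ.card = n - k := by
        rw [Finset.card_compl, hcard, hn]
      have h4 : T.card ≤ n - k + 1 := by omega
      have : ((n - k + 1 : ℕ) : ℝ) = (n:ℝ) - k + 1 := by
        push_cast [Nat.cast_sub hk]; ring
      calc (T.card : ℝ) ≤ ((n - k + 1 : ℕ) : ℝ) := by exact_mod_cast h4
        _ = (n:ℝ) - k + 1 := this
    have key : ∀ z, Relation.ReflTransGen (fun i j => d i j < ε) x z →
        ∃ T : Finset U, x ∈ T ∧ z ∈ T ∧ (∀ v ∈ T, v ∈ O → v = x) ∧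
          ∀ v ∈ T, d x v ≤ ((T.card : ℝ) - 1) * ε := by
      intro z hz
      induction hz with
      | refl =>
        refine ⟨{x}, Finset.mem_singleton_self x, Finset.mem_singleton_self x, ?_, ?_⟩
        · intro v hv _; exact Finset.mem_singleton.1 hv
        · intro v hv
          rw [Finset.mem_singleton.1 hv]
          simp [hzero]
      | @tail b c hxb hbc ih =>
        obtain ⟨T, hxT, hbT, hinv, hbound⟩ := ih
        by_cases hcT : c ∈ T
        · exact ⟨T, hxT, hcT, hinv, hbound⟩
        · have hxc : d x c < (T.card : ℝ) * ε := by
            have h1 : d x c ≤ d x b + d b c := htri x c b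
            have h2 : d x b ≤ ((T.card : ℝ) - 1) * ε := hbound b hbT
            have h3 : d b c < ε := hbc
            nlinarith
          have hcO : c ∈ O → c = x := by
            intro hcO'
            by_contra hcx
            have hR : R ≤ d x c := hO x hx c hcO' (fun h => hcx h.symm)
            have hle : (T.card : ℝ) * ε ≤ ((n:ℝ) - k + 1) * ε :=
              mul_le_mul_of_nonneg_right (hcardT T hxT hinv) (le_of_lt hε0)
            rw [hεR] at hle
            linarith
          refine ⟨insert c T, Finset.mem_insert_of_mem hxT, Finset.mem_insert_self c T, ?_, ?_⟩
          · intro v hv hvO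
            rcases Finset.mem_insert.1 hv with rfl | hvT
            · exact hcO hvO
            · exact hinv v hvT hvO
          · have hcardi : ((insert c T).card : ℝ) = (T.card : ℝ) + 1 := by
              rw [Finset.card_insert_of_notMem hcT]; push_cast; ring
            intro v hv
            rcases Finset.mem_insert.1 hv with rfl | hvT
            · rw [hcardi]; linarith
            · have := hbound v hvT
              have hTpos : (1:ℝ) ≤ (T.card : ℝ) := by
                exact_mod_cast Finset.card_pos.2 ⟨x, hxT⟩
              rw [hcardi]
              nlinarith
    obtain ⟨T, -, hyT, hinv, -⟩ := key y hreach
    exact hxy (hinv y hyT hy).symm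
end

section
/- Let O be a set of points with pairwise distance at least R* > 0 (in both directions) and let R' = min{d(u,v) : d(u,v) ≥ R*/3, u ≠ v} be the smallest distance at least R*/3. If the greedy ball-cover clustering is run with radius R ≤ R', then each cluster A_t contains at most one point of O. -/
/-- If the greedy ball-cover clustering is run with radius `R ≤ R'`, where
`R'` is the smallest distance that is at least `R*/3`, then each cluster `A t`
contains at most one point of the optimal set `O`. -/
theorem cluster_contains_at_most_one_optimal (U : Type*) [Fintype U]
    (d : U → U → ℝ) (R Rstar R' : ℝ)
    (hnn : ∀ u v, 0 ≤ d u v) (hzero : ∀ u, d u u = 0)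
    (htri : ∀ u v w, d u v ≤ d u w + d w v)
    (hRstar : 0 < Rstar)
    (O : Set U) (hO : ∀ x ∈ O, ∀ y ∈ O, x ≠ y → Rstar ≤ d x y)
    -- R' = min { d u v : d u v ≥ R*/3, u ≠ v }
    (hR'ge : Rstar / 3 ≤ R')
    (hR'mem : ∃ u v : U, u ≠ v ∧ d u v = R')
    (hR'min : ∀ u v : U, u ≠ v → Rstar / 3 ≤ d u v → R' ≤ d u v)
    (hRR' : R ≤ R')
    (T : ℕ) (c : Fin T → U) (A : Fin T → Set U)
    (hA : ∀ t : Fin T, ∀ v ∈ A t, max (d (c t) v) (d v (c t)) < R) :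
    ∀ t : Fin T, ∀ x ∈ A t, ∀ y ∈ A t, x ∈ O → y ∈ O → x = y := by
  have key : ∀ u v : U, d u v < R → d u v < Rstar / 3 := by
    intro u v h
    by_cases huv : u = v
    · subst huv; rw [hzero]; linarith
    · by_contra hge
      push_neg at hge
      have := hR'min u v huv hge
      linarith
  intro t x hx y hy hxO hyO
  by_contra hne
  have hxy := hO x hxO y hyO hne
  have h1 := hA t x hx
  have h2 := hA t y hy
  have hxc : d x (c t) < R := lt_of_le_of_lt (le_max_right _ _) h1
  have hcy : d (c t) y < R := lt_of_le_of_lt (le_max_left _ _) h2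
  have := htri x y (c t)
  have k1 := key x (c t) hxc
  have k2 := key (c t) y hcy
  linarith
end

section
/- Under the same setting, if clusters A_t and A_{t'} (t ≠ t') each contain a point of the optimal set O, then both d(c_t, c_{t'}) ≥ R' and d(c_{t'}, c_t) ≥ R', i.e., d_min(c_t, c_{t'}) ≥ R' ≥ R*/3. -/
/-- If two distinct clusters `A t` and `A t'` each contain a point of the
optimal set `O`, then their centers satisfy `d(c t, c t') ≥ R'` and
`d(c t', c t) ≥ R'`, i.e. `d_min(c t, c t') ≥ R' ≥ R*/3`. -/
theorem cluster_centers_far_if_optimal (U : Type*) [Fintype U]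
    (d : U → U → ℝ) (R Rstar R' : ℝ)
    (hnn : ∀ u v, 0 ≤ d u v) (hzero : ∀ u, d u u = 0)
    (htri : ∀ u v w, d u v ≤ d u w + d w v)
    (hRstar : 0 < Rstar)
    (O : Set U) (hO : ∀ x ∈ O, ∀ y ∈ O, x ≠ y → Rstar ≤ d x y)
    -- R' = min { d u v : d u v ≥ R*/3, u ≠ v }
    (hR'ge : Rstar / 3 ≤ R')
    (hR'mem : ∃ u v : U, u ≠ v ∧ d u v = R')
    (hR'min : ∀ u v : U, u ≠ v → Rstar / 3 ≤ d u v → R' ≤ d u v)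
    (hRR' : R ≤ R')
    (T : ℕ) (c : Fin T → U) (A : Fin T → Set U)
    (hdisj : ∀ t t' : Fin T, t ≠ t' → Disjoint (A t) (A t'))
    (hA : ∀ t : Fin T, ∀ v ∈ A t, max (d (c t) v) (d v (c t)) < R) :
    ∀ t t' : Fin T, t ≠ t' →
      ∀ x ∈ A t, ∀ y ∈ A t', x ∈ O → y ∈ O →
        R' ≤ d (c t) (c t') ∧ R' ≤ d (c t') (c t) ∧
          Rstar / 3 ≤ min (d (c t) (c t')) (d (c t') (c t)) := by
  intro t t' htt' x hx y hy hxO hyO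
  -- any distance < R' is < Rstar/3
  have small : ∀ u v : U, d u v < R' → d u v < Rstar / 3 := by
    intro u v h
    by_cases huv : u = v
    · subst huv; rw [hzero]; positivity
    · by_contra hc
      exact absurd (hR'min u v huv (le_of_not_gt hc)) (not_le.mpr h)
  have hxc : d x (c t) < Rstar / 3 :=
    small _ _ (lt_of_lt_of_le (lt_of_le_of_lt (le_max_right _ _) (hA t x hx)) hRR')
  have hcx : d (c t) x < Rstar / 3 :=
    small _ _ (lt_of_lt_of_le (lt_of_le_of_lt (le_max_left _ _) (hA t x hx)) hRR')
  have hyc : d y (c t') < Rstar / 3 :=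
    small _ _ (lt_of_lt_of_le (lt_of_le_of_lt (le_max_right _ _) (hA t' y hy)) hRR')
  have hcy : d (c t') y < Rstar / 3 :=
    small _ _ (lt_of_lt_of_le (lt_of_le_of_lt (le_max_left _ _) (hA t' y hy)) hRR')
  have hxy : x ≠ y := by
    intro h; subst h
    exact (hdisj t t' htt').ne_of_mem hx hy rfl
  have h1 : Rstar ≤ d x y := hO x hxO y hyO hxy
  have h2 : Rstar ≤ d y x := hO y hyO x hxO hxy.symm
  have t1 : d x y ≤ d x (c t) + (d (c t) (c t') + d (c t') y) :=
    le_trans (htri x y (c t)) (by linarith [htri (c t) y (c t')])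
  have t2 : d y x ≤ d y (c t') + (d (c t') (c t) + d (c t) x) :=
    le_trans (htri y x (c t')) (by linarith [htri (c t') x (c t)])
  have big1 : Rstar / 3 < d (c t) (c t') := by linarith
  have big2 : Rstar / 3 < d (c t') (c t) := by linarith
  have hne : c t ≠ c t' := by
    intro h; rw [h, hzero] at big1; linarith
  refine ⟨hR'min _ _ hne big1.le, hR'min _ _ hne.symm big2.le, ?_⟩
  exact le_min big1.le big2.le
end

section
/- Let U' be the set of centers produced by the greedy ball-cover clustering with radius R ≤ R' on an AMMD instance whose optimal k-set O has value R*. Then U' contains a subset S of size k with div(S) ≥ R' ≥ R*/3. -/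
/-- Corollary: the set `U'` of centers produced by the greedy ball-cover
clustering with radius `R ≤ R'` contains a subset `S` of `k` centers with
`div(S) ≥ R' ≥ R*/3`, where `R*` is the value of an optimal `k`-set `O`. -/
theorem centers_contain_good_subset (U : Type*) [Fintype U] [DecidableEq U]
    (d : U → U → ℝ) (R Rstar R' : ℝ) (k : ℕ)
    (hnn : ∀ u v, 0 ≤ d u v) (hzero : ∀ u, d u u = 0)
    (htri : ∀ u v w, d u v ≤ d u w + d w v)
    (hRstar : 0 < Rstar)
    (O : Finset U) (hOcard : O.card = k)
    (hO : ∀ x ∈ O, ∀ y ∈ O, x ≠ y → Rstar ≤ d x y)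
    -- R' = min { d u v : d u v ≥ R*/3, u ≠ v }
    (hR'ge : Rstar / 3 ≤ R')
    (hR'mem : ∃ u v : U, u ≠ v ∧ d u v = R')
    (hR'min : ∀ u v : U, u ≠ v → Rstar / 3 ≤ d u v → R' ≤ d u v)
    (hRR' : R ≤ R')
    -- the clustering: disjoint clusters `A t` with centers `c t` covering `U`
    (T : ℕ) (c : Fin T → U) (A : Fin T → Set U)
    (hdisj : ∀ t t' : Fin T, t ≠ t' → Disjoint (A t) (A t'))
    (hcA : ∀ t : Fin T, c t ∈ A t)
    (hA : ∀ t : Fin T, ∀ v ∈ A t, max (d (c t) v) (d v (c t)) < R)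
    (hcov : ∀ u : U, ∃ t : Fin T, u ∈ A t) :
    ∃ S : Finset U, (∀ s ∈ S, ∃ t : Fin T, s = c t) ∧ S.card = k ∧
      (∀ x ∈ S, ∀ y ∈ S, x ≠ y → R' ≤ d x y) ∧ Rstar / 3 ≤ R' := by
  classical
  choose t ht using hcov
  have key : ∀ u : U, d u (c (t u)) < Rstar / 3 ∧ d (c (t u)) u < Rstar / 3 := by
    intro u
    rcases eq_or_ne u (c (t u)) with h | h
    · constructor <;> · rw [← h, hzero]; linarith
    · have h1 := hA (t u) u (ht u)
      have h2 : d u (c (t u)) < R := lt_of_le_of_lt (le_max_right _ _) h1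
      have h3 : d (c (t u)) u < R := lt_of_le_of_lt (le_max_left _ _) h1
      constructor
      · by_contra hc
        push_neg at hc
        have := hR'min u (c (t u)) h hc
        linarith
      · by_contra hc
        push_neg at hc
        have := hR'min (c (t u)) u (Ne.symm h) hc
        linarith
  set f : U → U := fun o => c (t o) with hf
  have dist : ∀ o1 ∈ O, ∀ o2 ∈ O, o1 ≠ o2 → Rstar / 3 < d (f o1) (f o2) := by
    intro o1 h1 o2 h2 hne
    have hd := hO o1 h1 o2 h2 hne
    have k1 := (key o1).1
    have k2 := (key o2).2
    have t1 := htri o1 o2 (f o1)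
    have t2 := htri (f o1) o2 (f o2)
    simp only [hf] at *
    linarith
  have hinj : Set.InjOn f ↑O := by
    intro a ha b hb hab
    by_contra hne
    have hd := dist a ha b hb hne
    rw [hab, hzero] at hd
    linarith
  refine ⟨O.image f, ?_, ?_, ?_, hR'ge⟩
  · intro s hs
    rcases Finset.mem_image.mp hs with ⟨o, _, rfl⟩
    exact ⟨t o, rfl⟩
  · rw [Finset.card_image_of_injOn hinj, hOcard]
  · intro x hx y hy hxy
    rcases Finset.mem_image.mp hx with ⟨o1, h1, rfl⟩
    rcases Finset.mem_image.mp hy with ⟨o2, h2, rfl⟩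
    have hne : o1 ≠ o2 := fun h => hxy (by rw [h])
    exact hR'min _ _ hxy (le_of_lt (dist o1 h1 o2 h2 hne))
end
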